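/- arXiv:1703.05917 — 3 statements merged into one kernel-verified Lean document; each statement's English description precedes it below -/
import Mathlib

section
/- Let (X, R, C, F) be a catalytic reaction system. A nonempty finite subset R' ⊆ R is F-generated if and only if R' admits an enumeration r_1, …, r_k such that for each i, every reactant of r_i lies in F ∪ ⋃_{j<i} π(r_j). -/
/-- A catalytic reaction system (CRS): molecule types `M`, reactions `R`,
each reaction has a finite nonempty set of reactants and of products,
a catalysis relation, and a food set. -/
structure CRS (M R : Type*) where
  reactants : R → Finset M
  products : R → Finset M
  reactants_nonempty : ∀ r, (reactants r).Nonempty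
  products_nonempty : ∀ r, (products r).Nonempty
  catalyzes : M → R → Prop
  food : Set M

namespace CRS

variable {M R : Type*}

/-- The closure `cl_{R'}(F)`: the smallest set `W ⊇ F` such that for every
reaction in `R'` whose reactants all lie in `W`, the products lie in `W`. -/
def closure (Q : CRS M R) (R' : Set R) : Set M :=
  ⋂₀ {W : Set M | Q.food ⊆ W ∧
      ∀ r ∈ R', (Q.reactants r : Set M) ⊆ W → (Q.products r : Set M) ⊆ W}

/-- `R'` is F-generated: every reactant of every reaction in `R'` lies in the
closure of the food set under `R'`. -/
def FGenerated (Q : CRS M R) (R' : Set R) : Prop :=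
  ∀ r ∈ R', (Q.reactants r : Set M) ⊆ Q.closure R'

/-- `R'` is reflexively autocatalytic: every reaction in `R'` is catalyzed by
some molecule in the food set or among the products of reactions in `R'`. -/
def ReflexivelyAutocatalytic (Q : CRS M R) (R' : Set R) : Prop :=
  ∀ r ∈ R', ∃ x ∈ Q.food ∪ ⋃ r' ∈ R', (Q.products r' : Set M), Q.catalyzes x r

/-- A RAF: a nonempty subset of reactions that is both reflexively
autocatalytic and F-generated. -/
def RAF (Q : CRS M R) (R' : Set R) : Prop :=
  R'.Nonempty ∧ Q.ReflexivelyAutocatalytic R' ∧ Q.FGenerated R'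

/-- The molecules available before step `i` of a sequence of reactions:
the food set together with the products of the earlier reactions. -/
def priorAvailable (Q : CRS M R) {k : ℕ} (r : Fin k → R) (i : Fin k) : Set M :=
  Q.food ∪ ⋃ j : Fin k, ⋃ _ : j < i, (Q.products (r j) : Set M)

/-- A CAF sequence: a sequence of distinct reactions in which each reaction's
reactants are available from (and it has a catalyst in) the food set together
with the products of earlier reactions in the sequence. -/
def CAFSeq (Q : CRS M R) {k : ℕ} (r : Fin k → R) : Prop :=
  Function.Injective r ∧
    (∀ i, (Q.reactants (r i) : Set M) ⊆ Q.priorAvailable r i) ∧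
    (∀ i, ∃ x ∈ Q.priorAvailable r i, Q.catalyzes x (r i))

end CRS

/-!
Along an enumeration as on the right-hand side, the reactants of each reaction are food or products
of earlier reactions, so by induction along it they all lie in the closure. Conversely, if `R'` is
F-generated, some `r₀ ∈ R'` consumes only food, since otherwise the food set would already be closed
under `R'`. Putting `r₀` first and adding its products to the food set leaves `R' \ {r₀}`
F-generated, and induction on the size of `R'` enumerates the rest.
-/

namespace CRS

variable {M R : Type*} (Q : CRS M R)

def addFood (S : Set M) : CRS M R :=
  { Q with food := Q.food ∪ S }

lemma food_subset_closure (R' : Set R) : Q.food ⊆ Q.closure R' :=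
  fun _ hx => Set.mem_sInter.2 fun _ hW => hW.1 hx

section Closure

variable {Q} {R' : Set R}

lemma products_subset_closure {r : R} (hr : r ∈ R')
    (h : (Q.reactants r : Set M) ⊆ Q.closure R') : (Q.products r : Set M) ⊆ Q.closure R' :=
  fun _ hx => Set.mem_sInter.2 fun _ hW => hW.2 r hr (h.trans (Set.sInter_subset_of_mem hW)) hx

lemma closure_subset {W : Set M} (hfood : Q.food ⊆ W)
    (hclosed : ∀ r ∈ R', (Q.reactants r : Set M) ⊆ W → (Q.products r : Set M) ⊆ W) :
    Q.closure R' ⊆ W :=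
  Set.sInter_subset_of_mem ⟨hfood, hclosed⟩

lemma FGenerated.exists_reactants_subset_food (h : Q.FGenerated R') (hne : R'.Nonempty) :
    ∃ r ∈ R', (Q.reactants r : Set M) ⊆ Q.food := by
  by_contra! hnone
  have hclosure : Q.closure R' ⊆ Q.food :=
    closure_subset subset_rfl fun r hr hsub => absurd hsub (hnone r hr)
  obtain ⟨r, hr⟩ := hne
  exact hnone r hr ((h r hr).trans hclosure)

lemma closure_subset_addFood_closure {r₀ : R} (hfood : (Q.reactants r₀ : Set M) ⊆ Q.food) :
    Q.closure R' ⊆ (Q.addFood (Q.products r₀)).closure (R' \ {r₀}) := by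
  refine closure_subset (Set.subset_union_left.trans ((Q.addFood _).food_subset_closure _))
    fun r hr hsub => ?_
  by_cases hr' : r = r₀
  · subst hr'
    exact Set.subset_union_right.trans ((Q.addFood _).food_subset_closure _)
  · exact products_subset_closure (Q := Q.addFood _) (Set.mem_sdiff_singleton.2 ⟨hr, hr'⟩) hsub

lemma FGenerated.addFood_sdiff_singleton (h : Q.FGenerated R') {r₀ : R}
    (hfood : (Q.reactants r₀ : Set M) ⊆ Q.food) :
    (Q.addFood (Q.products r₀)).FGenerated (R' \ {r₀}) :=
  fun r hr => (h r hr.1).trans (closure_subset_addFood_closure hfood)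

end Closure

section Sequences

variable {k : ℕ}

lemma priorAvailable_cons_zero (r₀ : R) (s : Fin k → R) :
    Q.priorAvailable (Fin.cons r₀ s : Fin (k + 1) → R) 0 = Q.food := by
  simp [priorAvailable]

lemma priorAvailable_cons_succ (r₀ : R) (s : Fin k → R) (i : Fin k) :
    Q.priorAvailable (Fin.cons r₀ s : Fin (k + 1) → R) i.succ =
      (Q.addFood (Q.products r₀)).priorAvailable s i := by
  ext x
  simp [priorAvailable, addFood, Fin.exists_fin_succ, Fin.succ_pos, or_assoc]

lemma exists_injective_range_eq_of_fGenerated {R' : Set R} (hfin : R'.Finite)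
    (h : Q.FGenerated R') :
    ∃ (k : ℕ) (r : Fin k → R), Function.Injective r ∧ Set.range r = R' ∧
      ∀ i, (Q.reactants (r i) : Set M) ⊆ Q.priorAvailable r i := by
  induction hcard : R'.ncard generalizing Q R' with
  | zero =>
    obtain rfl : R' = ∅ := (Set.ncard_eq_zero hfin).1 hcard
    exact ⟨0, Fin.elim0, fun i => i.elim0, Set.range_eq_empty _, fun i => i.elim0⟩
  | succ n ih =>
    obtain ⟨r₀, hr₀, hfood⟩ :=
      h.exists_reactants_subset_food (Set.nonempty_of_ncard_ne_zero (by omega))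
    obtain ⟨k, s, hinj, hrange, hseq⟩ :=
      ih _ hfin.sdiff (h.addFood_sdiff_singleton hfood)
        (by rw [Set.ncard_sdiff_singleton_of_mem hr₀, hcard, Nat.add_sub_cancel])
    refine ⟨k + 1, Fin.cons r₀ s, ?_, ?_, fun i => ?_⟩
    · exact Fin.cons_injective_iff.2 ⟨by simp [hrange], hinj⟩
    · rw [Fin.range_cons, hrange, Set.insert_sdiff_singleton, Set.insert_eq_of_mem hr₀]
    · cases i using Fin.cases with
      | zero => rw [Fin.cons_zero, priorAvailable_cons_zero]; exact hfood
      | succ i => rw [Fin.cons_succ, priorAvailable_cons_succ]; exact hseq i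

lemma reactants_subset_closure_of_subset_priorAvailable {R' : Set R} {r : Fin k → R}
    (hrange : Set.range r ⊆ R')
    (hseq : ∀ i, (Q.reactants (r i) : Set M) ⊆ Q.priorAvailable r i) (i : Fin k) :
    (Q.reactants (r i) : Set M) ⊆ Q.closure R' := by
  induction i using WellFoundedLT.induction with
  | _ i ih =>
    refine (hseq i).trans (Set.union_subset (Q.food_subset_closure R') ?_)
    simp only [Set.iUnion_subset_iff]
    exact fun j hj => products_subset_closure (hrange ⟨j, rfl⟩) (ih j hj)

end Sequences

end CRS

theorem fGenerated_iff_exists_sequence_general {M R : Type*} (Q : CRS M R) (R' : Set R)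
    (hfin : R'.Finite) :
    Q.FGenerated R' ↔
      ∃ (k : ℕ) (r : Fin k → R), Function.Injective r ∧ Set.range r = R' ∧
        ∀ i : Fin k, (Q.reactants (r i) : Set M) ⊆
          Q.food ∪ ⋃ j : Fin k, ⋃ _ : j < i, (Q.products (r j) : Set M) := by
  refine ⟨Q.exists_injective_range_eq_of_fGenerated hfin, ?_⟩
  rintro ⟨k, r, -, rfl, hseq⟩ _ ⟨i, rfl⟩
  exact Q.reactants_subset_closure_of_subset_priorAvailable subset_rfl hseq i

/-- A nonempty finite subset `R'` of reactions is F-generated iff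
it admits an enumeration `r_1, …, r_k` such that each reaction's reactants lie
in the food set together with the products of earlier reactions. -/
theorem fGenerated_iff_exists_sequence {M R : Type*} (Q : CRS M R) (R' : Set R)
    (hne : R'.Nonempty) (hfin : R'.Finite) :
    Q.FGenerated R' ↔
      ∃ (k : ℕ) (r : Fin k → R), Function.Injective r ∧ Set.range r = R' ∧
        ∀ i : Fin k, (Q.reactants (r i) : Set M) ⊆
          Q.food ∪ ⋃ j : Fin k, ⋃ _ : j < i, (Q.products (r j) : Set M) :=
  fGenerated_iff_exists_sequence_general Q R' hfin
end

section
/- (Closure of autocatalytic sets under combination.) Let (X, R, C, F) be a catalytic reaction system. If R_1 and R_2 are RAFs of the system, then R_1 ∪ R_2 is a RAF. -/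
lemma CRS_closure_mono {M R : Type*} (Q : CRS M R) {A B : Set R} (h : A ⊆ B) :
    Q.closure A ⊆ Q.closure B := by
  intro x hx
  rw [CRS.closure, Set.mem_sInter] at hx ⊢
  intro W hW
  simp only [Set.mem_setOf_eq] at hW
  exact hx W ⟨hW.1, fun r hr => hW.2 r (h hr)⟩

/-- Closure of autocatalytic sets under combination: the union
of two RAFs is a RAF. -/
theorem rAF_union {M R : Type*} (Q : CRS M R) (R₁ R₂ : Set R)
    (h₁ : Q.RAF R₁) (h₂ : Q.RAF R₂) :
    Q.RAF (R₁ ∪ R₂) := by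
  obtain ⟨hne₁, hra₁, hfg₁⟩ := h₁
  obtain ⟨hne₂, hra₂, hfg₂⟩ := h₂
  refine ⟨hne₁.mono Set.subset_union_left, ?_, ?_⟩
  · intro r hr
    have key : ∀ (S : Set R), S ⊆ R₁ ∪ R₂ → r ∈ S →
        Q.ReflexivelyAutocatalytic S →
        ∃ x ∈ Q.food ∪ ⋃ r' ∈ R₁ ∪ R₂, ((Q.products r' : Set M)), Q.catalyzes x r := by
      intro S hS hrS hra
      obtain ⟨x, hx, hcat⟩ := hra r hrS
      refine ⟨x, ?_, hcat⟩
      rcases hx with hx | hx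
      · exact Or.inl hx
      · right
        simp only [Set.mem_iUnion] at hx ⊢
        obtain ⟨r', hr', hx⟩ := hx
        exact ⟨r', hS hr', hx⟩
    rcases hr with hr | hr
    · exact key R₁ Set.subset_union_left hr hra₁
    · exact key R₂ Set.subset_union_right hr hra₂
  · intro r hr
    rcases hr with hr | hr
    · exact (hfg₁ r hr).trans (CRS_closure_mono Q Set.subset_union_left)
    · exact (hfg₂ r hr).trans (CRS_closure_mono Q Set.subset_union_right)
end

section
/- (Existence of a unique maximal RAF.) Let (X, R, C, F) be a catalytic reaction system with R finite. If the system has at least one RAF, then the union of all RAFs of the system is itself a RAF; it is the unique maximal RAF, and it contains every RAF of the system as a subset. -/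
lemma CRS.closure_mono {M R : Type*} (Q : CRS M R) {S T : Set R} (h : S ⊆ T) :
    Q.closure S ⊆ Q.closure T := by
  intro x hx
  intro W hW
  exact hx W ⟨hW.1, fun r hr => hW.2 r (h hr)⟩

/-- Existence of a unique maximal RAF: if a catalytic reaction
system with finitely many reactions has at least one RAF, then the union of
all its RAFs is itself a RAF, it contains every RAF as a subset, and it is
the unique maximal RAF. -/
theorem maxRAF {M R : Type*} [Finite R] (Q : CRS M R) (h : ∃ R', Q.RAF R') :
    Q.RAF (⋃₀ {R' : Set R | Q.RAF R'}) ∧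
    (∀ R' : Set R, Q.RAF R' → R' ⊆ ⋃₀ {R' : Set R | Q.RAF R'}) ∧
    (∀ U : Set R, Q.RAF U → (∀ R' : Set R, Q.RAF R' → R' ⊆ U) →
      U = ⋃₀ {R' : Set R | Q.RAF R'}) := by
  obtain ⟨R0, hR0⟩ := h
  have hsub : ∀ R' : Set R, Q.RAF R' → R' ⊆ ⋃₀ {R' : Set R | Q.RAF R'} :=
    fun R' hR' => Set.subset_sUnion_of_mem hR'
  have hraf : Q.RAF (⋃₀ {R' : Set R | Q.RAF R'}) := by
    refine ⟨hR0.1.mono (hsub R0 hR0), ?_, ?_⟩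
    · rintro r ⟨S, hS, hrS⟩
      obtain ⟨x, hx, hcat⟩ := hS.2.1 r hrS
      refine ⟨x, ?_, hcat⟩
      rcases hx with hx | hx
      · exact Or.inl hx
      · refine Or.inr ?_
        simp only [Set.mem_iUnion] at hx ⊢
        obtain ⟨r', hr', hxr'⟩ := hx
        exact ⟨r', ⟨S, hS, hr'⟩, hxr'⟩
    · rintro r ⟨S, hS, hrS⟩
      exact (hS.2.2 r hrS).trans (Q.closure_mono (Set.subset_sUnion_of_mem hS))
  refine ⟨hraf, hsub, fun U hU hmax => ?_⟩
  exact subset_antisymm (hsub U hU) (Set.sUnion_subset fun S hS => hmax S hS)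
end
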